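/- Let E be any simplicial commutative k-algebra, let D_4 denote the ideal of E_4 generated by the degenerate elements (the images of s_0, s_1, s_2, s_3 : E_3 → E_4), and let NE_4 = ⋂_{i=0}^{3} ker(d_i : E_4 → E_3). Then for all x_2 ∈ NE_2 and y_3 ∈ NE_3 the element s_2 x_2 · (s_1 d_3 y_3 − s_2 d_3 y_3 + y_3) of E_3 lies in d_4(NE_4 ∩ D_4); in particular, modulo d_4(NE_4 ∩ D_4) one has s_2 x_2 (s_1 d_3 y_3 − s_2 d_3 y_3) ≡ − s_2 x_2 · y_3. -/

import Mathlib

/-- A simplicial commutative `k`-algebra: a family of commutative `k`-algebras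
`obj n` together with face algebra homomorphisms `d n i : obj (n+1) →ₐ[k] obj n`
(representing `d_i : E_{n+1} → E_n`, `0 ≤ i ≤ n+1`) and degeneracy algebra
homomorphisms `s n i : obj n →ₐ[k] obj (n+1)` (representing
`s_i : E_n → E_{n+1}`, `0 ≤ i ≤ n`), satisfying the simplicial identities. -/
structure SimplicialCommAlg (k : Type*) [CommRing k]
    (obj : ℕ → Type*) [∀ n, CommRing (obj n)] [∀ n, Algebra k (obj n)] where
  d : (n : ℕ) → ℕ → (obj (n + 1) →ₐ[k] obj n)
  s : (n : ℕ) → ℕ → (obj n →ₐ[k] obj (n + 1))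
  dd : ∀ (n i j : ℕ), i < j → j ≤ n + 2 →
    (d n i).comp (d (n + 1) j) = (d n (j - 1)).comp (d (n + 1) i)
  ds_lt : ∀ (m i j : ℕ), i < j → j ≤ m + 1 →
    (d (m + 1) i).comp (s (m + 1) j) = (s m (j - 1)).comp (d m i)
  ds_self : ∀ (n j : ℕ), j ≤ n → (d n j).comp (s n j) = AlgHom.id k (obj n)
  ds_succ : ∀ (n j : ℕ), j ≤ n → (d n (j + 1)).comp (s n j) = AlgHom.id k (obj n)
  ds_gt : ∀ (m i j : ℕ), j + 1 < i → i ≤ m + 2 →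
    (d (m + 1) i).comp (s (m + 1) j) = (s m j).comp (d m (i - 1))
  ss : ∀ (n i j : ℕ), i ≤ j → j ≤ n →
    (s (n + 1) i).comp (s n j) = (s (n + 1) (j + 1)).comp (s n i)


/-! The witness is `w = s₃ s₂ x₂ · (s₁ y₃ - s₂ y₃ + s₃ y₃)`, degenerate because its first factor
is. That factor is killed by `d₁` since `d₁ x₂ = 0`, and the alternating sum is killed by
`d₀, d₂, d₃` since `y₃ ∈ NE₃`, so `w ∈ NE₄`. On `d₄ w` both factors collapse to the element in
question, using `d₄ s₃ = id`. -/

namespace SimplicialCommAlg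

variable {k : Type*} [CommRing k] {obj : ℕ → Type*} [∀ n, CommRing (obj n)]
  [∀ n, Algebra k (obj n)] (E : SimplicialCommAlg k obj)

theorem d_s_of_lt {m i j : ℕ} (hij : i < j) (hj : j ≤ m + 1) (x : obj (m + 1)) :
    E.d (m + 1) i (E.s (m + 1) j x) = E.s m (j - 1) (E.d m i x) :=
  AlgHom.congr_fun (E.ds_lt m i j hij hj) x

theorem d_s_self {n j : ℕ} (hj : j ≤ n) (x : obj n) : E.d n j (E.s n j x) = x :=
  AlgHom.congr_fun (E.ds_self n j hj) x

theorem d_succ_s {n j : ℕ} (hj : j ≤ n) (x : obj n) : E.d n (j + 1) (E.s n j x) = x :=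
  AlgHom.congr_fun (E.ds_succ n j hj) x

theorem d_s_of_gt {m i j : ℕ} (hij : j + 1 < i) (hi : i ≤ m + 2) (x : obj (m + 1)) :
    E.d (m + 1) i (E.s (m + 1) j x) = E.s m j (E.d m (i - 1) x) :=
  AlgHom.congr_fun (E.ds_gt m i j hij hi) x

theorem d_s_s_of_le_one (x : obj 2) {i : ℕ} (hi : i ≤ 1) :
    E.d 3 i (E.s 3 3 (E.s 2 2 x)) = E.s 2 2 (E.s 1 1 (E.d 1 i x)) := by
  interval_cases i <;> simp [d_s_of_lt]

theorem d_s_s_of_two_le (x : obj 2) {i : ℕ} (hi₂ : 2 ≤ i) (hi₄ : i ≤ 4) :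
    E.d 3 i (E.s 3 3 (E.s 2 2 x)) = E.s 2 2 x := by
  interval_cases i <;> simp [d_s_of_lt, d_s_self, d_succ_s]

def altDegen (y : obj 3) : obj 4 :=
  E.s 3 1 y - E.s 3 2 y + E.s 3 3 y

theorem d_zero_altDegen {y : obj 3} (hy : E.d 2 0 y = 0) : E.d 3 0 (E.altDegen y) = 0 := by
  simp [altDegen, d_s_of_lt, hy]

theorem d_two_altDegen {y : obj 3} (hy : E.d 2 2 y = 0) : E.d 3 2 (E.altDegen y) = 0 := by
  simp [altDegen, d_s_of_lt, d_s_self, d_succ_s, hy]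

theorem d_three_altDegen {y : obj 3} (hy : E.d 2 2 y = 0) : E.d 3 3 (E.altDegen y) = 0 := by
  simp [altDegen, d_s_of_gt, d_s_self, d_succ_s, hy]

theorem d_four_altDegen (y : obj 3) :
    E.d 3 4 (E.altDegen y) = E.s 2 1 (E.d 2 3 y) - E.s 2 2 (E.d 2 3 y) + y := by
  simp [altDegen, d_s_of_gt, d_succ_s]

end SimplicialCommAlg

theorem stmt_19 {k : Type*} [CommRing k] {obj : ℕ → Type*}
    [∀ n, CommRing (obj n)] [∀ n, Algebra k (obj n)]
    (E : SimplicialCommAlg k obj)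
    (x2 : obj 2) (hx2 : E.d 1 0 x2 = 0 ∧ E.d 1 1 x2 = 0) (y3 : obj 3) (hy3 : E.d 2 0 y3 = 0 ∧ E.d 2 1 y3 = 0 ∧ E.d 2 2 y3 = 0) :
    ∃ w : obj 4,
      (E.d 3 0 w = 0 ∧ E.d 3 1 w = 0 ∧ E.d 3 2 w = 0 ∧ E.d 3 3 w = 0) ∧
      w ∈ Ideal.span (Set.range (E.s 3 0) ∪ Set.range (E.s 3 1) ∪
        Set.range (E.s 3 2) ∪ Set.range (E.s 3 3)) ∧
      E.d 3 4 w = E.s 2 2 x2 * (E.s 2 1 (E.d 2 3 y3) - E.s 2 2 (E.d 2 3 y3) + y3) := by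
  obtain ⟨-, hx1⟩ := hx2
  obtain ⟨hy0, -, hy2⟩ := hy3
  refine ⟨E.s 3 3 (E.s 2 2 x2) * E.altDegen y3, ⟨?_, ?_, ?_, ?_⟩, ?_, ?_⟩
  · rw [map_mul, E.d_zero_altDegen hy0, mul_zero]
  · rw [map_mul, E.d_s_s_of_le_one x2 le_rfl, hx1, map_zero, map_zero, zero_mul]
  · rw [map_mul, E.d_two_altDegen hy2, mul_zero]
  · rw [map_mul, E.d_three_altDegen hy2, mul_zero]
  · exact Ideal.mul_mem_right _ _ (Ideal.subset_span (Or.inr ⟨_, rfl⟩))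
  · rw [map_mul, E.d_s_s_of_two_le x2 (by norm_num) le_rfl, E.d_four_altDegen]
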